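/- Define σ^GHZ_{a,b|x,y} := (1/8)[ I + ((−1)^b/√2)( Z + x (−1)^{a+y} X ) ] for a, b, x, y ∈ {0,1}. Let Λ = {0,1}², and for λ = (λ₀, λ₁) ∈ Λ set P_λ = 1/4, ϱ_λ = I/2 + ((−1)^{λ₀}/(2√2))( Z + (−1)^{λ₁} X ), and P(a,b|x,y,λ) = δ_{λ₀,b} · (1 + x (−1)^{a+y+λ₁})/2. Then: (i) each ϱ_λ is a density matrix (positive semidefinite with trace 1); (ii) each P(·,·|x,y,λ) is a conditional probability distribution, i.e. P(a,b|x,y,λ) ≥ 0 and ∑_{a,b} P(a,b|x,y,λ) = 1 for all x, y, λ; and (iii) σ^GHZ_{a,b|x,y} = ∑_{λ∈Λ} P_λ P(a,b|x,y,λ) ϱ_λ for all a, b, x, y. Hence σ^GHZ admits an LHS model. -/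

import Mathlib

/-!
Each hidden state is `ϱ_λ = ½ (1 + n_z Z + n_x X)` with a unit Bloch vector `n`; since `Z` and `X`
square to `1` and anticommute, `(n_z Z + n_x X)² = 1`, so `ϱ_λ` is a Hermitian projection of trace
one and hence a density matrix. In the decomposition the factor `δ_{λ₀,b}` selects `λ₀ = b`, and
averaging `ϱ_{(b,λ₁)}` over `λ₁` with weights `(1 + x (-1)^{a+y+λ₁}) / 2` turns the coefficient
`(-1)^{λ₁}` of `X` into `x (-1)^{a+y}`.
-/

open Matrix BigOperators ComplexOrder

noncomputable section

/-- Pauli X matrix. -/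
def X : Matrix (Fin 2) (Fin 2) ℂ := !![0, 1; 1, 0]

/-- Pauli Z matrix. -/
def Z : Matrix (Fin 2) (Fin 2) ℂ := !![1, 0; 0, -1]

/-- The GHZ assemblage σ^GHZ_{a,b|x,y}. -/
def σGHZ : Fin 2 → Fin 2 → Fin 2 → Fin 2 → Matrix (Fin 2) (Fin 2) ℂ := fun a b x y =>
  (1 / 8 : ℝ) • ((1 : Matrix (Fin 2) (Fin 2) ℂ) +
    ((-1 : ℝ) ^ (b : ℕ) / Real.sqrt 2) •
      (Z + (((x : ℕ) : ℝ) * (-1 : ℝ) ^ ((a : ℕ) + (y : ℕ))) • X))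

/-- A tripartite family `σ a b x y` of 2×2 complex matrices admits an LHS model. -/
def IsLHS3 (σ : Fin 2 → Fin 2 → Fin 2 → Fin 2 → Matrix (Fin 2) (Fin 2) ℂ) : Prop :=
  ∃ (n : ℕ) (P : Fin n → ℝ) (ϱ : Fin n → Matrix (Fin 2) (Fin 2) ℂ)
    (q : Fin 2 → Fin 2 → Fin 2 → Fin 2 → Fin n → ℝ),
    (∀ l, 0 ≤ P l) ∧ (∑ l, P l = 1) ∧
    (∀ l, (ϱ l).PosSemidef) ∧ (∀ l, (ϱ l).trace = 1) ∧
    (∀ a b x y l, 0 ≤ q a b x y l) ∧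
    (∀ x y l, ∑ a, ∑ b, q a b x y l = 1) ∧
    (∀ a b x y, σ a b x y = ∑ l, (P l * q a b x y l) • ϱ l)

/-- The hidden states of the LHS model for the GHZ assemblage. -/
def ϱhid : Fin 2 × Fin 2 → Matrix (Fin 2) (Fin 2) ℂ := fun l =>
  (1 / 2 : ℝ) • (1 : Matrix (Fin 2) (Fin 2) ℂ) +
    ((-1 : ℝ) ^ (l.1 : ℕ) / (2 * Real.sqrt 2)) • (Z + ((-1 : ℝ) ^ (l.2 : ℕ)) • X)

/-- The hidden behaviors of the LHS model for the GHZ assemblage. -/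
def Phid (a b x y : Fin 2) (l : Fin 2 × Fin 2) : ℝ :=
  (if l.1 = b then 1 else 0) *
    ((1 + ((x : ℕ) : ℝ) * (-1 : ℝ) ^ ((a : ℕ) + (y : ℕ) + (l.2 : ℕ))) / 2)

lemma Matrix.PosSemidef.of_isHermitian_of_mul_self {n : Type*} [Fintype n]
    {A : Matrix n n ℂ} (hA : A.IsHermitian) (hAA : A * A = A) : A.PosSemidef := by
  simpa [hA.eq, hAA] using posSemidef_conjTranspose_mul_self A

lemma half_smul_one_add_smul_mul_self {A : Type*} [Ring A] [Algebra ℝ A] {B : A} {k r : ℝ}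
    (hB : B * B = r • 1) (hk : k ^ 2 * r = 1 / 4) :
    ((1 / 2 : ℝ) • 1 + k • B) * ((1 / 2 : ℝ) • 1 + k • B) = (1 / 2 : ℝ) • 1 + k • B := by
  have hk' : k * k * r = 1 / 4 := by rw [← hk]; ring
  simp only [add_mul, mul_add, smul_mul_smul, one_mul, mul_one, hB, smul_smul, hk']
  module

lemma Z_isHermitian : Z.IsHermitian := by
  ext i j; fin_cases i <;> fin_cases j <;> simp [Z]

lemma X_isHermitian : X.IsHermitian := by
  ext i j; fin_cases i <;> fin_cases j <;> simp [X]

lemma Z_mul_Z : Z * Z = 1 := by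
  ext i j; fin_cases i <;> fin_cases j <;> simp [Z]

lemma X_mul_X : X * X = 1 := by
  ext i j; fin_cases i <;> fin_cases j <;> simp [X]

lemma X_mul_Z : X * Z = -(Z * X) := by
  ext i j; fin_cases i <;> fin_cases j <;> simp [X, Z]

lemma trace_Z : Z.trace = 0 := by simp [Z, trace_fin_two]

lemma trace_X : X.trace = 0 := by simp [X, trace_fin_two]

lemma Z_add_smul_X_mul_self (s : ℝ) : (Z + s • X) * (Z + s • X) = (1 + s ^ 2) • 1 := by
  simp only [add_mul, mul_add, Matrix.smul_mul, Matrix.mul_smul, smul_smul, Z_mul_Z, X_mul_X,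
    X_mul_Z]
  module

lemma ϱhid_isHermitian (l : Fin 2 × Fin 2) : (ϱhid l).IsHermitian :=
  (isHermitian_one.smul (.all _)).add
    ((Z_isHermitian.add (X_isHermitian.smul (.all _))).smul (.all _))

lemma ϱhid_mul_self (l : Fin 2 × Fin 2) : ϱhid l * ϱhid l = ϱhid l := by
  refine half_smul_one_add_smul_mul_self (Z_add_smul_X_mul_self _) ?_
  have h2 : Real.sqrt 2 ^ 2 = 2 := Real.sq_sqrt zero_le_two
  simp only [div_pow, mul_pow, h2, ← pow_right_comm _ 2, neg_one_sq, one_pow]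
  norm_num

lemma ϱhid_posSemidef (l : Fin 2 × Fin 2) : (ϱhid l).PosSemidef :=
  .of_isHermitian_of_mul_self (ϱhid_isHermitian l) (ϱhid_mul_self l)

lemma trace_ϱhid (l : Fin 2 × Fin 2) : (ϱhid l).trace = 1 := by
  simp [ϱhid, trace_Z, trace_X]

lemma one_add_mul_neg_one_pow_nonneg {t : ℝ} (h0 : 0 ≤ t) (h1 : t ≤ 1) (n : ℕ) :
    0 ≤ 1 + t * (-1) ^ n := by
  rcases neg_one_pow_eq_or ℝ n with h | h <;> rw [h] <;> linarith

lemma Phid_nonneg (a b x y : Fin 2) (l : Fin 2 × Fin 2) : 0 ≤ Phid a b x y l := by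
  have hx : ((x : ℕ) : ℝ) ≤ 1 := by exact_mod_cast Nat.le_of_lt_succ x.isLt
  exact mul_nonneg (by split_ifs <;> norm_num)
    (div_nonneg (one_add_mul_neg_one_pow_nonneg (by positivity) hx _) zero_le_two)

lemma sum_fin_two_neg_one_pow_add (m : ℕ) : ∑ a : Fin 2, (-1 : ℝ) ^ ((a : ℕ) + m) = 0 := by
  simp [Fin.sum_univ_two, pow_add]

lemma sum_Phid (x y : Fin 2) (l : Fin 2 × Fin 2) : ∑ a, ∑ b, Phid a b x y l = 1 := by
  simp only [Phid, ← Finset.sum_mul, Finset.sum_ite_eq, Finset.mem_univ, if_true, one_mul]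
  rw [← Finset.sum_div]
  simp only [Finset.sum_add_distrib, ← Finset.mul_sum, add_assoc, sum_fin_two_neg_one_pow_add]
  norm_num

lemma Phid_eq_zero {a b x y : Fin 2} {l : Fin 2 × Fin 2} (h : l.1 ≠ b) : Phid a b x y l = 0 := by
  simp [Phid, h]

lemma σGHZ_eq_sum (a b x y : Fin 2) :
    σGHZ a b x y = ∑ l : Fin 2 × Fin 2, ((1 / 4 : ℝ) * Phid a b x y l) • ϱhid l := by
  rw [Fintype.sum_prod_type, Finset.sum_eq_single_of_mem b (Finset.mem_univ _)
    fun l₁ _ h => Finset.sum_eq_zero fun l₂ _ => by rw [Phid_eq_zero h, mul_zero, zero_smul]]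
  simp only [Fin.sum_univ_two, σGHZ, ϱhid, Phid, if_pos, Fin.val_zero, Fin.val_one, pow_zero,
    add_zero, pow_succ]
  match_scalars <;> ring

lemma isLHS3_of_fintype {ι : Type*} [Fintype ι]
    {σ : Fin 2 → Fin 2 → Fin 2 → Fin 2 → Matrix (Fin 2) (Fin 2) ℂ}
    (P : ι → ℝ) (ϱ : ι → Matrix (Fin 2) (Fin 2) ℂ) (q : Fin 2 → Fin 2 → Fin 2 → Fin 2 → ι → ℝ)
    (hP : ∀ l, 0 ≤ P l) (hP1 : ∑ l, P l = 1) (hϱ : ∀ l, (ϱ l).PosSemidef)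
    (hϱ1 : ∀ l, (ϱ l).trace = 1) (hq : ∀ a b x y l, 0 ≤ q a b x y l)
    (hq1 : ∀ x y l, ∑ a, ∑ b, q a b x y l = 1)
    (hσ : ∀ a b x y, σ a b x y = ∑ l, (P l * q a b x y l) • ϱ l) : IsLHS3 σ := by
  let e := (Fintype.equivFin ι).symm
  refine ⟨Fintype.card ι, P ∘ e, ϱ ∘ e, fun a b x y => q a b x y ∘ e, fun l => hP _,
    (e.sum_comp P).trans hP1, fun l => hϱ _, fun l => hϱ1 _, fun a b x y l => hq _ _ _ _ _,
    fun x y l => hq1 _ _ _, fun a b x y => ?_⟩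
  rw [hσ]
  exact (e.sum_comp fun l => (P l * q a b x y l) • ϱ l).symm

theorem ghz_assemblage_LHS :
    (∀ l : Fin 2 × Fin 2, (ϱhid l).PosSemidef ∧ (ϱhid l).trace = 1) ∧
    (∀ (a b x y : Fin 2) (l : Fin 2 × Fin 2), 0 ≤ Phid a b x y l) ∧
    (∀ (x y : Fin 2) (l : Fin 2 × Fin 2), ∑ a, ∑ b, Phid a b x y l = 1) ∧
    (∀ a b x y : Fin 2,
      σGHZ a b x y = ∑ l : Fin 2 × Fin 2, ((1 / 4 : ℝ) * Phid a b x y l) • ϱhid l) ∧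
    IsLHS3 σGHZ := by
  refine ⟨fun l => ⟨ϱhid_posSemidef l, trace_ϱhid l⟩, Phid_nonneg, sum_Phid, σGHZ_eq_sum, ?_⟩
  exact isLHS3_of_fintype (fun _ => 1 / 4) ϱhid Phid (fun _ => by norm_num) (by norm_num)
    ϱhid_posSemidef trace_ϱhid Phid_nonneg sum_Phid σGHZ_eq_sum
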